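/- arXiv:2202.10161 — 2 statements merged into one kernel-verified Lean document; each statement's English description precedes it below -/
import Mathlib

section
/- Let A = [[Ψ, B],[−Bᵀ, 0]] ∈ ℂ^{2n×2n} with Ψ, B ∈ ℝ^{n×n}, and let λ ∈ ℂ be an eigenvalue with eigenvector (v,w), v ≠ 0. Write Ψ = Ψ_s + Ψ_a with Ψ_s := (Ψ+Ψᵀ)/2 and Ψ_a := (Ψ−Ψᵀ)/2. Then (Re λ − p_r)² + (Im λ − p_i)² = r², where p_r := v*Ψ_s v/‖v‖², p_i := −i·v*Ψ_a v/‖v‖² (a real number), and r² := (‖Bw‖² − ‖Ψv‖²)/‖v‖² + p_r² + p_i². -/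
/-!
The first block row of the eigen-equation gives `B w = λ v - Ψ v`, so
`‖B w‖² = |λ|² ‖v‖² - 2 Re (conj λ · q) + ‖Ψ v‖²` with `q = v* Ψ v`. The Hermitian and
skew-Hermitian parts of `Ψ` pick out `Re q = ‖v‖² p_r` and `Im q = ‖v‖² p_i`; dividing by `‖v‖²`
and completing the square gives the circle.
-/
open scoped Matrix ComplexConjugate ComplexOrder

namespace Matrix

variable {ι : Type*} [Fintype ι]

theorem star_dotProduct_conjTranspose_mulVec (A : Matrix ι ι ℂ) (v : ι → ℂ) :
    star v ⬝ᵥ Aᴴ *ᵥ v = conj (star v ⬝ᵥ A *ᵥ v) := by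
  rw [dotProduct_mulVec, ← star_star v, ← star_mulVec, star_star, star_dotProduct]
  rfl

theorem re_star_dotProduct_hermitianPart_mulVec (A : Matrix ι ι ℂ) (v : ι → ℂ) :
    (star v ⬝ᵥ ((2 : ℂ)⁻¹ • (A + Aᴴ)) *ᵥ v).re = (star v ⬝ᵥ A *ᵥ v).re := by
  rw [smul_mulVec, add_mulVec, dotProduct_smul, dotProduct_add,
    star_dotProduct_conjTranspose_mulVec, smul_eq_mul, Complex.add_conj]
  simp

theorem re_neg_I_mul_star_dotProduct_skewPart_mulVec (A : Matrix ι ι ℂ) (v : ι → ℂ) :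
    (-Complex.I * (star v ⬝ᵥ ((2 : ℂ)⁻¹ • (A - Aᴴ)) *ᵥ v)).re = (star v ⬝ᵥ A *ᵥ v).im := by
  rw [smul_mulVec, sub_mulVec, dotProduct_smul, dotProduct_sub,
    star_dotProduct_conjTranspose_mulVec, smul_eq_mul, Complex.sub_conj]
  simp

theorem im_star_dotProduct_self (v : ι → ℂ) : (star v ⬝ᵥ v).im = 0 :=
  (Complex.nonneg_iff.mp (dotProduct_star_self_nonneg v)).2.symm

theorem re_star_dotProduct_self_ne_zero {v : ι → ℂ} (hv : v ≠ 0) : (star v ⬝ᵥ v).re ≠ 0 :=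
  fun h ↦ hv (dotProduct_star_self_eq_zero.mp (Complex.ext h (im_star_dotProduct_self v)))

theorem re_star_dotProduct_smul_sub (c : ℂ) (v u : ι → ℂ) :
    (star (c • v - u) ⬝ᵥ (c • v - u)).re =
      Complex.normSq c * (star v ⬝ᵥ v).re
        - 2 * (c.re * (star v ⬝ᵥ u).re + c.im * (star v ⬝ᵥ u).im) + (star u ⬝ᵥ u).re := by
  have hsym : star u ⬝ᵥ v = conj (star v ⬝ᵥ u) := star_dotProduct u v
  simp only [star_sub, star_smul, sub_dotProduct, dotProduct_sub, smul_dotProduct,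
    dotProduct_smul, smul_eq_mul, hsym, Complex.sub_re, Complex.sub_im, Complex.mul_re,
    Complex.mul_im, Complex.star_def, Complex.conj_re, Complex.conj_im, im_star_dotProduct_self,
    Complex.normSq_apply]
  ring

theorem fromBlocks_mulVec_sum_elim_inl {R l m n o : Type*} [Fintype l] [Fintype m]
    [NonUnitalNonAssocSemiring R] {A : Matrix n l R} {B : Matrix n m R} {C : Matrix o l R}
    {D : Matrix o m R} {v : l → R} {w : m → R} {x : n ⊕ o → R}
    (h : fromBlocks A B C D *ᵥ Sum.elim v w = x) : A *ᵥ v + B *ᵥ w = x ∘ Sum.inl := by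
  rw [← h, fromBlocks_mulVec]
  rfl

end Matrix

/-- Circle theorem for saddle-point matrices (Theorem 3): each eigenvalue
`λ` of `A = [[Ψ, B], [-Bᵀ, 0]]` with eigenvector `(v, w)`, `v ≠ 0`, lies on
the circle centered at `(p_r, p_i)` with radius `r`, where `p_r, p_i` are
the Rayleigh quotients of the symmetric and skew-symmetric parts of `Ψ`. -/
theorem stmt_14 {n : ℕ} (Ψ B : Matrix (Fin n) (Fin n) ℝ)
    (lam : ℂ) (v w : Fin n → ℂ) (hv : v ≠ 0)
    (heig :
      (Matrix.fromBlocks (Ψ.map Complex.ofReal) (B.map Complex.ofReal)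
          (-(B.transpose.map Complex.ofReal)) 0).mulVec (Sum.elim v w) =
        lam • Sum.elim v w) :
    let Ψs : Matrix (Fin n) (Fin n) ℝ := (2:ℝ)⁻¹ • (Ψ + Ψ.transpose)
    let Ψa : Matrix (Fin n) (Fin n) ℝ := (2:ℝ)⁻¹ • (Ψ - Ψ.transpose)
    let nv2 : ℝ := (star v ⬝ᵥ v).re
    let pr : ℝ := (star v ⬝ᵥ (Ψs.map Complex.ofReal).mulVec v).re / nv2
    let pi' : ℝ :=
      (-Complex.I * (star v ⬝ᵥ (Ψa.map Complex.ofReal).mulVec v)).re / nv2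
    let Bw : Fin n → ℂ := (B.map Complex.ofReal).mulVec w
    let Ψv : Fin n → ℂ := (Ψ.map Complex.ofReal).mulVec v
    let r2 : ℝ := ((star Bw ⬝ᵥ Bw).re - (star Ψv ⬝ᵥ Ψv).re) / nv2
      + pr ^ 2 + pi' ^ 2
    (lam.re - pr) ^ 2 + (lam.im - pi') ^ 2 = r2 := by
  intro Ψs Ψa nv2 pr pi' Bw Ψv r2
  have hBw : Bw = lam • v - Ψv :=
    eq_sub_of_add_eq' (Matrix.fromBlocks_mulVec_sum_elim_inl heig)
  have hΨs : Ψs.map ((↑) : ℝ → ℂ) = (2 : ℂ)⁻¹ • (Ψ.map (↑) + (Ψ.map (↑))ᴴ) := by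
    ext i j
    simp [Ψs, mul_add]
  have hΨa : Ψa.map ((↑) : ℝ → ℂ) = (2 : ℂ)⁻¹ • (Ψ.map (↑) - (Ψ.map (↑))ᴴ) := by
    ext i j
    simp [Ψa]
  have hnv2 : (star v ⬝ᵥ v).re ≠ 0 := Matrix.re_star_dotProduct_self_ne_zero hv
  simp only [r2, pr, pi', nv2, Ψv, hΨs, hΨa, Matrix.re_star_dotProduct_hermitianPart_mulVec,
    Matrix.re_neg_I_mul_star_dotProduct_skewPart_mulVec, hBw, Matrix.re_star_dotProduct_smul_sub,
    Complex.normSq_apply]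
  field_simp
  ring
end

section
/- Let A = [[Ψ, B],[−Bᵀ, 0]] ∈ ℝ^{2n×2n} with Ψ symmetric positive definite and B invertible. If λ ∈ ℂ is an eigenvalue of A with eigenvector (v,w), v ≠ 0, then λ satisfies the quadratic equation λ² − (v*Ψv/‖v‖²)·λ + (v*BBᵀv/‖v‖²) = 0; consequently λ is real and positive whenever (v*Ψv/‖v‖²)² ≥ 4·(v*BBᵀv/‖v‖²). -/
/-!
Eliminating `w` from the block equations gives `λ Ψ v - B Bᵀ v = λ² v`, and pairing with `v*`
gives the quadratic. Its coefficients are positive reals because the complexifications of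
`B Bᵀ` and of `Ψ = S Sᵀ` are Gram matrices `C Cᴴ` of invertible complex matrices; a real
quadratic with positive coefficients and nonnegative discriminant has only positive real roots.
-/

open scoped Matrix ComplexOrder

namespace Matrix

variable {n : Type*} [Fintype n]

theorem smul_mulVec_add_mul_mulVec_eq_sq_smul {R m : Type*} [CommRing R] [Fintype m]
    {P : Matrix n n R} {B : Matrix n m R} {C : Matrix m n R} {lam : R} {v : n → R} {w : m → R}
    (h : fromBlocks P B C 0 *ᵥ Sum.elim v w = lam • Sum.elim v w) :
    lam • (P *ᵥ v) + (B * C) *ᵥ v = lam ^ 2 • v := by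
  rw [fromBlocks_mulVec] at h
  have hv : P *ᵥ v + B *ᵥ w = lam • v := funext fun i => by
    simpa using congrFun h (Sum.inl i)
  have hw : C *ᵥ v = lam • w := funext fun i => by
    simpa using congrFun h (Sum.inr i)
  rw [← mulVec_mulVec, hw, mulVec_smul, ← sub_eq_of_eq_add' hv.symm]
  module

variable [DecidableEq n]

theorem posDef_map_ofReal_mul_transpose {B : Matrix n n ℝ} (hB : IsUnit B.det) :
    ((B * Bᵀ).map Complex.ofReal).PosDef := by
  have hBc : IsUnit (B.map Complex.ofReal) :=
    ((isUnit_iff_isUnit_det B).mpr hB).map Complex.ofRealHom.mapMatrix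
  have hmap : (B * Bᵀ).map Complex.ofReal = B.map Complex.ofReal * (B.map Complex.ofReal)ᴴ := by
    rw [← conjTranspose_map _ fun _ => (Complex.conj_ofReal _).symm,
      conjTranspose_eq_transpose_of_trivial]
    exact Matrix.map_mul (f := Complex.ofRealHom)
  rw [hmap]
  exact PosDef.mul_conjTranspose_self _ (vecMul_injective_iff_isUnit.mpr hBc)

open scoped MatrixOrder in
theorem PosDef.exists_mul_transpose {Ψ : Matrix n n ℝ} (hΨ : Ψ.PosDef) :
    ∃ S : Matrix n n ℝ, IsUnit S.det ∧ Ψ = S * Sᵀ := by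
  obtain ⟨S, rfl⟩ := CStarAlgebra.nonneg_iff_eq_star_mul_self.mp hΨ.posSemidef.nonneg
  have hdet : IsUnit ((star S).det * S.det) := det_mul (star S) S ▸ hΨ.isUnit.map detMonoidHom
  refine ⟨star S, isUnit_of_mul_isUnit_left hdet, ?_⟩
  rw [star_eq_conjTranspose, conjTranspose_eq_transpose_of_trivial, transpose_transpose]

theorem PosDef.map_ofReal {Ψ : Matrix n n ℝ} (hΨ : Ψ.PosDef) :
    (Ψ.map Complex.ofReal).PosDef := by
  obtain ⟨S, hS, rfl⟩ := hΨ.exists_mul_transpose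
  exact posDef_map_ofReal_mul_transpose hS

end Matrix

theorem Complex.im_eq_zero_and_re_pos_of_sq_sub_mul_add_eq_zero {z : ℂ} {a b : ℝ} (ha : 0 < a)
    (hb : 0 < b) (hdisc : 4 * b ≤ a ^ 2) (hz : z ^ 2 - a * z + b = 0) :
    z.im = 0 ∧ 0 < z.re := by
  have hre : z.re ^ 2 - z.im ^ 2 - a * z.re + b = 0 := by
    simpa [sq] using congrArg Complex.re hz
  have him : z.im * (2 * z.re - a) = 0 := by
    linear_combination (by simpa [sq] using congrArg Complex.im hz : _ = _)
  have him0 : z.im = 0 := by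
    rcases mul_eq_zero.mp him with h | h
    · exact h
    · nlinarith [sq_nonneg z.im]
  refine ⟨him0, ?_⟩
  rw [him0] at hre
  nlinarith

/-- Eigenvalue quadratic relation for the saddle-point matrix
`A = [[Ψ, B], [-Bᵀ, 0]]` with `Ψ` symmetric positive definite and `B`
invertible: every eigenvalue satisfies
`λ² − (v*Ψv/‖v‖²)λ + (v*BBᵀv/‖v‖²) = 0`, and it is real and positive when
the discriminant is nonnegative. -/
theorem stmt_16 {n : ℕ} (Ψ B : Matrix (Fin n) (Fin n) ℝ)
    (hΨ : Ψ.PosDef) (hB : IsUnit B.det)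
    (lam : ℂ) (v w : Fin n → ℂ) (hv : v ≠ 0)
    (heig :
      (Matrix.fromBlocks (Ψ.map Complex.ofReal) (B.map Complex.ofReal)
          (-(B.transpose.map Complex.ofReal)) 0).mulVec (Sum.elim v w) =
        lam • Sum.elim v w) :
    let nv2 : ℝ := (star v ⬝ᵥ v).re
    let a : ℂ := (star v ⬝ᵥ (Ψ.map Complex.ofReal).mulVec v) / (nv2 : ℂ)
    let b : ℂ :=
      (star v ⬝ᵥ ((B * B.transpose).map Complex.ofReal).mulVec v) / (nv2 : ℂ)
    (lam ^ 2 - a * lam + b = 0) ∧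
      (a.re ^ 2 ≥ 4 * b.re → lam.im = 0 ∧ 0 < lam.re) := by
  intro nv2 a b
  have hN : 0 < star v ⬝ᵥ v := Matrix.dotProduct_star_self_pos_iff.mpr hv
  have hnv2 : (nv2 : ℂ) = star v ⬝ᵥ v :=
    (Complex.eq_re_of_ofReal_le (r := 0) (by exact_mod_cast hN.le)).symm
  have ha : 0 < a := div_pos (hΨ.map_ofReal.dotProduct_mulVec_pos hv) (hnv2 ▸ hN)
  have hb : 0 < b :=
    div_pos ((Matrix.posDef_map_ofReal_mul_transpose hB).dotProduct_mulVec_pos hv) (hnv2 ▸ hN)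
  have hquad : lam ^ 2 - a * lam + b = 0 := by
    have hBB : B.map Complex.ofReal * Bᵀ.map Complex.ofReal = (B * Bᵀ).map Complex.ofReal :=
      (Matrix.map_mul (f := Complex.ofRealHom)).symm
    have h := congrArg (star v ⬝ᵥ ·) (Matrix.smul_mulVec_add_mul_mulVec_eq_sq_smul heig)
    simp only [Matrix.mul_neg, hBB, Matrix.neg_mulVec, dotProduct_add, dotProduct_neg,
      dotProduct_smul, smul_eq_mul] at h
    simp only [a, b, hnv2]
    field_simp
    linear_combination -h
  refine ⟨hquad, fun hdisc => ?_⟩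
  rw [Complex.eq_re_of_ofReal_le ha.le, Complex.eq_re_of_ofReal_le hb.le] at hquad
  exact Complex.im_eq_zero_and_re_pos_of_sq_sub_mul_add_eq_zero (Complex.pos_iff.mp ha).1
    (Complex.pos_iff.mp hb).1 hdisc hquad
end
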